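/- arXiv:math/0608472 — 3 statements merged into one kernel-verified Lean document; each statement's English description precedes it below -/
import Mathlib

section
/- The 7×7 real matrix A₂ (a matrix representation of the map ev×j near a flat cycle, for the type α₂ in which the flat cycle survives on the e₁-side) has determinant det A₂ = −n·(n+m)²·δ(u,v₁)·δ(u,v₂). -/
/-- δ(x,y) = x₁y₂ − x₂y₁ for x, y ∈ ℝ². -/
def del (x y : ℝ × ℝ) : ℝ := x.1 * y.2 - x.2 * y.1

/-- The 7×7 matrix A₂: a matrix representation of ev×j near a flat cycle, for the
type α₂ in which the flat cycle survives on the e₁-side. -/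
def A₂ (u v₁ v₂ : ℝ × ℝ) (n m : ℝ) : Matrix (Fin 7) (Fin 7) ℝ :=
  !![1, 0, 0,    0,    n*u.1, 0,       0;
     0, 1, 0,    0,    n*u.2, 0,       0;
     1, 0, v₁.1, 0,    0,     0,       0;
     0, 1, v₁.2, 0,    0,     0,       0;
     1, 0, 0,    v₂.1, 0,     n*m*u.1, (n+m)*u.1;
     0, 1, 0,    v₂.2, 0,     n*m*u.2, (n+m)*u.2;
     0, 0, 0,    0,    0,     m+n,     0]

lemma cons6_5 (x : ℝ) (u : Fin 5 → ℝ) : Matrix.vecCons x u 5 = u 4 := rfl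
lemma cons5_4 (x : ℝ) (u : Fin 4 → ℝ) : Matrix.vecCons x u 4 = u 3 := rfl
lemma cons4_3 (x : ℝ) (u : Fin 3 → ℝ) : Matrix.vecCons x u 3 = u 2 := rfl
lemma cons3_2 (x : ℝ) (u : Fin 2 → ℝ) : Matrix.vecCons x u 2 = u 1 := rfl
lemma cons2_1 (x : ℝ) (u : Fin 1 → ℝ) : Matrix.vecCons x u 1 = u 0 := rfl
lemma cons1_0 (x : ℝ) (u : Fin 0 → ℝ) : Matrix.vecCons x u 0 = x := rfl

/-- Expansion of a 7×7 determinant along a last row having a single nonzero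
entry in column 5. -/
lemma det7_row (M : Matrix (Fin 7) (Fin 7) ℝ) (c : ℝ) (h5 : M 6 5 = c)
    (h : ∀ j, j ≠ 5 → M 6 j = 0) :
    M.det = -(c * (M.submatrix (Fin.succAbove 6) (Fin.succAbove 5)).det) := by
  rw [Matrix.det_succ_row M 6, Finset.sum_eq_single 5]
  · rw [h5, show ((6:Fin 7):ℕ) = 6 from rfl, show ((5:Fin 7):ℕ) = 5 from rfl]; norm_num
  · intro b _ hb; rw [h b hb]; ring
  · intro hmem; exact absurd (Finset.mem_univ _) hmem

/-- Expansion of a 6×6 determinant along a last column having a single nonzero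
entry in row `i0`. -/
lemma det6_col (M : Matrix (Fin 6) (Fin 6) ℝ) (c : ℝ) (i0 : Fin 6) (hi : M i0 5 = c)
    (h : ∀ i, i ≠ i0 → M i 5 = 0) :
    M.det = (-1)^((i0 : ℕ) + 5) * c *
      (M.submatrix (Fin.succAbove i0) (Fin.succAbove 5)).det := by
  rw [Matrix.det_succ_column M 5, Finset.sum_eq_single i0]
  · rw [hi, show ((5:Fin 6):ℕ) = 5 from rfl]
  · intro b _ hb; rw [h b hb]; ring
  · intro hmem; exact absurd (Finset.mem_univ _) hmem

lemma det5_a (n u1 u2 a1 a2 b2 : ℝ) :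
    (!![1, 0, 0, 0, n*u1;
        0, 1, 0, 0, n*u2;
        1, 0, a1, 0, 0;
        0, 1, a2, 0, 0;
        0, 1, 0, b2, 0] : Matrix (Fin 5) (Fin 5) ℝ).det
      = n * b2 * (a1 * u2 - a2 * u1) := by
  simp [Matrix.det_succ_row_zero, Fin.sum_univ_succ, Fin.succAbove]
  ring

lemma det5_b (n u1 u2 a1 a2 b1 : ℝ) :
    (!![1, 0, 0, 0, n*u1;
        0, 1, 0, 0, n*u2;
        1, 0, a1, 0, 0;
        0, 1, a2, 0, 0;
        1, 0, 0, b1, 0] : Matrix (Fin 5) (Fin 5) ℝ).det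
      = n * b1 * (a1 * u2 - a2 * u1) := by
  simp [Matrix.det_succ_row_zero, Fin.sum_univ_succ, Fin.succAbove]
  ring

lemma det6_main (n m u1 u2 a1 a2 b1 b2 : ℝ) :
    (!![1, 0, 0, 0, n*u1, 0;
        0, 1, 0, 0, n*u2, 0;
        1, 0, a1, 0, 0, 0;
        0, 1, a2, 0, 0, 0;
        1, 0, 0, b1, 0, (n+m)*u1;
        0, 1, 0, b2, 0, (n+m)*u2] : Matrix (Fin 6) (Fin 6) ℝ).det
      = n*(n+m)*(u1*a2-u2*a1)*(u1*b2-u2*b1) := by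
  set M : Matrix (Fin 6) (Fin 6) ℝ :=
    !![1, 0, 0, 0, n*u1, 0;
       0, 1, 0, 0, n*u2, 0;
       1, 0, a1, 0, 0, 0;
       0, 1, a2, 0, 0, 0;
       1, 0, 0, b1, 0, (n+m)*u1;
       0, 1, 0, b2, 0, (n+m)*u2] with hM
  set Ma : Matrix (Fin 6) (Fin 6) ℝ :=
    !![1, 0, 0, 0, n*u1, 0;
       0, 1, 0, 0, n*u2, 0;
       1, 0, a1, 0, 0, 0;
       0, 1, a2, 0, 0, 0;
       1, 0, 0, b1, 0, (n+m)*u1;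
       0, 1, 0, b2, 0, 0] with hMa
  set Mb : Matrix (Fin 6) (Fin 6) ℝ :=
    !![1, 0, 0, 0, n*u1, 0;
       0, 1, 0, 0, n*u2, 0;
       1, 0, a1, 0, 0, 0;
       0, 1, a2, 0, 0, 0;
       1, 0, 0, b1, 0, 0;
       0, 1, 0, b2, 0, (n+m)*u2] with hMb
  have hsplit : M.det = Ma.det + Mb.det := by
    have h1 : M = M.updateCol 5
        ((fun i => Ma i 5) + fun i => Mb i 5) := by
      ext i j
      fin_cases i <;> fin_cases j <;>
        simp [hM, hMa, hMb, Matrix.updateCol_apply, cons6_5, cons5_4, cons4_3,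
          cons3_2, cons2_1, cons1_0]
    have h2 : M.updateCol 5 (fun i => Ma i 5) = Ma := by
      ext i j
      fin_cases i <;> fin_cases j <;>
        simp [hM, hMa, Matrix.updateCol_apply, cons6_5, cons5_4, cons4_3,
          cons3_2, cons2_1, cons1_0]
    have h3 : M.updateCol 5 (fun i => Mb i 5) = Mb := by
      ext i j
      fin_cases i <;> fin_cases j <;>
        simp [hM, hMb, Matrix.updateCol_apply, cons6_5, cons5_4, cons4_3,
          cons3_2, cons2_1, cons1_0]
    rw [h1, Matrix.det_updateCol_add, h2, h3]
  have ha : Ma.det = -((n+m)*u1) * (n * b2 * (a1 * u2 - a2 * u1)) := by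
    rw [det6_col Ma ((n+m)*u1) 4 rfl (by intro i hi; fin_cases i <;> simp_all <;> rfl)]
    have : Ma.submatrix (Fin.succAbove 4) (Fin.succAbove 5)
        = !![1, 0, 0, 0, n*u1;
             0, 1, 0, 0, n*u2;
             1, 0, a1, 0, 0;
             0, 1, a2, 0, 0;
             0, 1, 0, b2, 0] := by
      ext i j; fin_cases i <;> fin_cases j <;> rfl
    rw [this, det5_a, show ((4:Fin 6):ℕ) = 4 from rfl]
    norm_num
  have hb : Mb.det = ((n+m)*u2) * (n * b1 * (a1 * u2 - a2 * u1)) := by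
    rw [det6_col Mb ((n+m)*u2) 5 rfl (by intro i hi; fin_cases i <;> simp_all <;> rfl)]
    have : Mb.submatrix (Fin.succAbove 5) (Fin.succAbove 5)
        = !![1, 0, 0, 0, n*u1;
             0, 1, 0, 0, n*u2;
             1, 0, a1, 0, 0;
             0, 1, a2, 0, 0;
             1, 0, 0, b1, 0] := by
      ext i j; fin_cases i <;> fin_cases j <;> rfl
    rw [this, det5_b, show ((5:Fin 6):ℕ) = 5 from rfl]
    norm_num
  rw [hsplit, ha, hb]
  ring

theorem det_A₂ (u v₁ v₂ : ℝ × ℝ) (n m : ℝ) :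
    (A₂ u v₁ v₂ n m).det = -n * (n+m)^2 * del u v₁ * del u v₂ := by
  rw [det7_row (A₂ u v₁ v₂ n m) (m+n) rfl
      (by intro j hj; fin_cases j <;> simp_all <;> rfl)]
  have : (A₂ u v₁ v₂ n m).submatrix (Fin.succAbove 6) (Fin.succAbove 5)
      = !![1, 0, 0, 0, n*u.1, 0;
           0, 1, 0, 0, n*u.2, 0;
           1, 0, v₁.1, 0, 0, 0;
           0, 1, v₁.2, 0, 0, 0;
           1, 0, 0, v₂.1, 0, (n+m)*u.1;
           0, 1, 0, v₂.2, 0, (n+m)*u.2] := by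
    ext i j; fin_cases i <;> fin_cases j <;> rfl
  rw [this, det6_main]
  simp only [del]
  ring
end

section
/- The 7×7 real matrix A₄ (a matrix representation of ev×j for the type α₄ with respect to the chosen basis involving M₁′, M₂, M₃) has determinant det A₄ = −δ(u,v₁)·δ(u,v₂)·n²·((m²+n·m)·(δ(u,v₁)+δ(u,v₂)) − n·δ(v₁,v₂)). -/
/-- M₁′ = −δ(v₁,v₂) − m·δ(u,v₁) − m·δ(u,v₂). -/
def M₁' (u v₁ v₂ : ℝ × ℝ) (m : ℝ) : ℝ := -(del v₁ v₂) - m * del u v₁ - m * del u v₂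

/-- M₂ = −n·δ(u,v₂). -/
def M₂ (u v₂ : ℝ × ℝ) (n : ℝ) : ℝ := -(n * del u v₂)

/-- M₃ = n·δ(u,v₁). -/
def M₃ (u v₁ : ℝ × ℝ) (n : ℝ) : ℝ := n * del u v₁

/-- z = M₂·(−v₁−m·u) ∈ ℝ². -/
def zVec (u v₁ v₂ : ℝ × ℝ) (n m : ℝ) : ℝ × ℝ := (M₂ u v₂ n) • (-v₁ - m • u)

/-- The 7×7 matrix A₄: a matrix representation of ev×j for the type α₄ with respect
to the chosen basis involving M₁′, M₂, M₃. -/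
def A₄ (u v₁ v₂ : ℝ × ℝ) (n m : ℝ) : Matrix (Fin 7) (Fin 7) ℝ :=
  !![1, 0, 0,    0,    n*u.1, 0,       (zVec u v₁ v₂ n m).1;
     0, 1, 0,    0,    n*u.2, 0,       (zVec u v₁ v₂ n m).2;
     1, 0, v₁.1, 0,    0,     0,       0;
     0, 1, v₁.2, 0,    0,     0,       0;
     1, 0, 0,    v₂.1, 0,     n*m*u.1, 0;
     0, 1, 0,    v₂.2, 0,     n*m*u.2, 0;
     0, 0, 0,    0,    0,     m+n,     M₁' u v₁ v₂ m + M₂ u v₂ n - M₃ u v₁ n]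

set_option maxHeartbeats 1600000 in
set_option maxRecDepth 20000 in
lemma det6a (a1 a2 b1 b2 p1 p2 z1 z2 : ℝ) :
    (!![1, 0, 0,  0,  p1, z1;
        0, 1, 0,  0,  p2, z2;
        1, 0, a1, 0,  0,  0;
        0, 1, a2, 0,  0,  0;
        1, 0, 0,  b1, 0,  0;
        0, 1, 0,  b2, 0,  0] : Matrix (Fin 6) (Fin 6) ℝ).det =
      -(a1*b2*p1*z2 - a1*b2*p2*z1 - a2*b1*p1*z2 + a2*b1*p2*z1) := by
  simp [Matrix.det_succ_row_zero, Fin.sum_univ_succ, Fin.succAbove,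
    Fin.castSucc, Fin.castAdd, Fin.castLE, Fin.succ]
  norm_num [show ((3:Fin 4):ℕ)=3 from rfl, show ((3:Fin 5):ℕ)=3 from rfl,
    show ((3:Fin 6):ℕ)=3 from rfl, show ((2:Fin 4):ℕ)=2 from rfl,
    show ((2:Fin 5):ℕ)=2 from rfl, show ((4:Fin 5):ℕ)=4 from rfl,
    show ((4:Fin 6):ℕ)=4 from rfl, show (![(0:ℝ),1,0,0,p2,z2] 5) = z2 from rfl,
    show (![(0:ℝ),1,0,b2,0,0] 5) = 0 from rfl]
  ring

set_option maxHeartbeats 1600000 in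
set_option maxRecDepth 20000 in
lemma det6b (a1 a2 b1 b2 p1 p2 w1 w2 : ℝ) :
    (!![1, 0, 0,  0,  p1, 0;
        0, 1, 0,  0,  p2, 0;
        1, 0, a1, 0,  0,  0;
        0, 1, a2, 0,  0,  0;
        1, 0, 0,  b1, 0,  w1;
        0, 1, 0,  b2, 0,  w2] : Matrix (Fin 6) (Fin 6) ℝ).det =
      a1*b1*p2*w2 - a1*b2*p2*w1 - a2*b1*p1*w2 + a2*b2*p1*w1 := by
  simp [Matrix.det_succ_row_zero, Fin.sum_univ_succ, Fin.succAbove,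
    Fin.castSucc, Fin.castAdd, Fin.castLE, Fin.succ]
  norm_num [show ((3:Fin 4):ℕ)=3 from rfl, show ((3:Fin 5):ℕ)=3 from rfl,
    show ((3:Fin 6):ℕ)=3 from rfl, show ((2:Fin 4):ℕ)=2 from rfl,
    show ((2:Fin 5):ℕ)=2 from rfl, show ((4:Fin 5):ℕ)=4 from rfl,
    show ((4:Fin 6):ℕ)=4 from rfl, show (![(0:ℝ),1,0,0,p2,0] 5) = 0 from rfl,
    show (![(0:ℝ),1,0,b2,0,w2] 5) = w2 from rfl]
  ring

theorem det_A₄ (u v₁ v₂ : ℝ × ℝ) (n m : ℝ) :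
    (A₄ u v₁ v₂ n m).det =
      -(del u v₁) * del u v₂ * n^2 *
        ((m^2 + n*m) * (del u v₁ + del u v₂) - n * del v₁ v₂) := by
  have h5 : (A₄ u v₁ v₂ n m).submatrix (Fin.succAbove 6) (Fin.succAbove 5) =
      !![1, 0, 0,    0,    n*u.1, (zVec u v₁ v₂ n m).1;
         0, 1, 0,    0,    n*u.2, (zVec u v₁ v₂ n m).2;
         1, 0, v₁.1, 0,    0,     0;
         0, 1, v₁.2, 0,    0,     0;
         1, 0, 0,    v₂.1, 0,     0;
         0, 1, 0,    v₂.2, 0,     0] := by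
    ext i j; fin_cases i <;> fin_cases j <;> rfl
  have h6 : (A₄ u v₁ v₂ n m).submatrix (Fin.succAbove 6) (Fin.succAbove 6) =
      !![1, 0, 0,    0,    n*u.1, 0;
         0, 1, 0,    0,    n*u.2, 0;
         1, 0, v₁.1, 0,    0,     0;
         0, 1, v₁.2, 0,    0,     0;
         1, 0, 0,    v₂.1, 0,     n*m*u.1;
         0, 1, 0,    v₂.2, 0,     n*m*u.2] := by
    ext i j; fin_cases i <;> fin_cases j <;> rfl
  rw [Matrix.det_succ_row (A₄ u v₁ v₂ n m) 6]
  norm_num [Fin.sum_univ_succ, show ((6:Fin 7):ℕ) = 6 from rfl, show ((5:Fin 7):ℕ) = 5 from rfl,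
    show Fin.succ (2:Fin 3) = (3:Fin 4) from rfl,
    show Fin.succ (2:Fin 4) = (3:Fin 5) from rfl,
    show Fin.succ (2:Fin 5) = (3:Fin 6) from rfl,
    show Fin.succ (2:Fin 6) = (3:Fin 7) from rfl,
    show Fin.succ (3:Fin 4) = (4:Fin 5) from rfl,
    show Fin.succ (3:Fin 5) = (4:Fin 6) from rfl,
    show Fin.succ (3:Fin 6) = (4:Fin 7) from rfl,
    show Fin.succ (4:Fin 5) = (5:Fin 6) from rfl,
    show Fin.succ (4:Fin 6) = (5:Fin 7) from rfl,
    show Fin.succ (5:Fin 6) = (6:Fin 7) from rfl,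
    show Fin.succ (2:Fin 6) = (3:Fin 7) from rfl, show Fin.succ (3:Fin 6) = (4:Fin 7) from rfl,
    show Fin.succ (4:Fin 6) = (5:Fin 7) from rfl, show Fin.succ (5:Fin 6) = (6:Fin 7) from rfl,
    show (A₄ u v₁ v₂ n m) 6 0 = 0 from rfl, show (A₄ u v₁ v₂ n m) 6 1 = 0 from rfl,
    show (A₄ u v₁ v₂ n m) 6 2 = 0 from rfl, show (A₄ u v₁ v₂ n m) 6 3 = 0 from rfl,
    show (A₄ u v₁ v₂ n m) 6 4 = 0 from rfl,
    show (A₄ u v₁ v₂ n m) 6 5 = m + n from rfl,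
    show (A₄ u v₁ v₂ n m) 6 6 = M₁' u v₁ v₂ m + M₂ u v₂ n - M₃ u v₁ n from rfl,
    h5, h6, det6a, det6b]
  simp only [zVec, M₁', M₂, M₃, del, Prod.smul_fst, Prod.smul_snd, Prod.fst_sub, Prod.snd_sub,
    Prod.fst_neg, Prod.snd_neg, smul_eq_mul]
  ring
end

section
/- Let v₁, v₂, v₃ ∈ ℝ² be the direction vectors of the three edges forming a cycle, i.e. suppose there exist positive real numbers l₁, l₂, l₃ with l₁·v₁ + l₂·v₂ + l₃·v₃ = 0. Then the absolute value of the determinant of the 3×3 matrix whose first row is (1,1,1), whose second row is (v₁₍₁₎, v₂₍₁₎, v₃₍₁₎) and whose third row is (v₁₍₂₎, v₂₍₂₎, v₃₍₂₎) equals |δ(v₁,v₂)| + |δ(v₁,v₃)| + |δ(v₂,v₃)| (in the dual picture, this sum of three 2×2 determinants is the double area of the triangle dual to the vertex obtained by shrinking the cycle, i.e. the multiplicity of that vertex). -/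
/-!
Applying `δ(vᵢ, ·)` to the cycle relation `l₁ v₁ + l₂ v₂ + l₃ v₃ = 0` shows that the cyclic
minors `(δ(v₂,v₃), δ(v₃,v₁), δ(v₁,v₂))` are a common multiple `t • (l₁, l₂, l₃)` of the positive
weights. So they share a sign, and the determinant, which is their sum, has absolute value
`|t| (l₁ + l₂ + l₃)`, the sum of their absolute values.
-/

lemma del_swap (x y : ℝ × ℝ) : del y x = -del x y := by
  unfold del; ring

lemma det_ones_row_eq_del (v₁ v₂ v₃ : ℝ × ℝ) :
    (!![(1 : ℝ), 1, 1;
         v₁.1, v₂.1, v₃.1;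
         v₁.2, v₂.2, v₃.2]).det = del v₁ v₂ + del v₂ v₃ + del v₃ v₁ := by
  rw [Matrix.det_fin_three]
  simp only [Fin.isValue, Matrix.of_apply, Matrix.cons_val', Matrix.cons_val_zero,
    Matrix.cons_val_fin_one, Matrix.cons_val_one, one_mul, Matrix.cons_val, del]
  ring

lemma exists_del_eq_mul_of_linear_relation {v₁ v₂ v₃ : ℝ × ℝ} {l₁ l₂ l₃ : ℝ} (hl₃ : l₃ ≠ 0)
    (h : l₁ • v₁ + l₂ • v₂ + l₃ • v₃ = 0) :
    ∃ t : ℝ, del v₂ v₃ = t * l₁ ∧ del v₃ v₁ = t * l₂ ∧ del v₁ v₂ = t * l₃ := by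
  have h₁ : l₁ * v₁.1 + l₂ * v₂.1 + l₃ * v₃.1 = 0 := by simpa using congrArg Prod.fst h
  have h₂ : l₁ * v₁.2 + l₂ * v₂.2 + l₃ * v₃.2 = 0 := by simpa using congrArg Prod.snd h
  refine ⟨del v₁ v₂ / l₃, ?_, ?_, by field_simp⟩ <;> field_simp <;> unfold del
  · linear_combination v₂.1 * h₂ - v₂.2 * h₁
  · linear_combination v₁.2 * h₁ - v₁.1 * h₂

/-- If v₁, v₂, v₃ are the directions of the three edges forming a cycle (i.e. some
positive combination of them vanishes), then the absolute value of the determinant of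
the 3×3 matrix with first row (1,1,1) and the coordinates of the vᵢ below equals
|δ(v₁,v₂)| + |δ(v₁,v₃)| + |δ(v₂,v₃)|, the multiplicity of the vertex obtained by
shrinking the cycle. -/
theorem shrink_cycle_multiplicity (v₁ v₂ v₃ : ℝ × ℝ)
    (h : ∃ l₁ l₂ l₃ : ℝ, 0 < l₁ ∧ 0 < l₂ ∧ 0 < l₃ ∧
      l₁ • v₁ + l₂ • v₂ + l₃ • v₃ = 0) :
    |(!![(1 : ℝ), 1, 1;
         v₁.1, v₂.1, v₃.1;
         v₁.2, v₂.2, v₃.2]).det|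
      = |del v₁ v₂| + |del v₁ v₃| + |del v₂ v₃| := by
  obtain ⟨l₁, l₂, l₃, hl₁, hl₂, hl₃, hrel⟩ := h
  obtain ⟨t, h₂₃, h₃₁, h₁₂⟩ := exists_del_eq_mul_of_linear_relation hl₃.ne' hrel
  rw [det_ones_row_eq_del, del_swap v₃ v₁, abs_neg, h₁₂, h₂₃, h₃₁, ← mul_add, ← mul_add]
  simp only [abs_mul, abs_of_pos hl₁, abs_of_pos hl₂, abs_of_pos hl₃,
    abs_of_pos (by positivity : 0 < l₃ + l₁ + l₂)]
  ring
end
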